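/- For all real numbers $0 < r < s$ and $0 < r' < s'$ with $r \le r'$ and $s \le s'$, we have $\left(\frac{\Gamma(s)}{\Gamma(r)}\right)^{1/(s-r)} \le \left(\frac{\Gamma(s')}{\Gamma(r')}\right)^{1/(s'-r')}$. -/
import Mathlib

open Real

theorem qi_gamma_monotone (r s r' s' : ℝ) (hr : 0 < r) (hrs : r < s)
    (hr' : 0 < r') (hrs' : r' < s') (h1 : r ≤ r') (h2 : s ≤ s') :
    (Real.Gamma s / Real.Gamma r) ^ (1 / (s - r)) ≤
      (Real.Gamma s' / Real.Gamma r') ^ (1 / (s' - r')) := by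
  have hs : 0 < s := hr.trans hrs
  have hs' : 0 < s' := hr'.trans hrs'
  have hΓr := Real.Gamma_pos_of_pos hr
  have hΓs := Real.Gamma_pos_of_pos hs
  have hΓr' := Real.Gamma_pos_of_pos hr'
  have hΓs' := Real.Gamma_pos_of_pos hs'
  have hconv := Real.convexOn_log_Gamma
  have key1 : ((log ∘ Real.Gamma) s - (log ∘ Real.Gamma) r) / (s - r) ≤
      ((log ∘ Real.Gamma) s' - (log ∘ Real.Gamma) r) / (s' - r) :=
    hconv.secant_mono (Set.mem_Ioi.2 hr) (Set.mem_Ioi.2 hs) (Set.mem_Ioi.2 hs')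
      hrs.ne' ((hrs.trans_le h2).ne') h2
  have key2 : ((log ∘ Real.Gamma) r - (log ∘ Real.Gamma) s') / (r - s') ≤
      ((log ∘ Real.Gamma) r' - (log ∘ Real.Gamma) s') / (r' - s') :=
    hconv.secant_mono (Set.mem_Ioi.2 hs') (Set.mem_Ioi.2 hr) (Set.mem_Ioi.2 hr')
      (hrs.trans_le h2).ne hrs'.ne h1
  have key2' : ((log ∘ Real.Gamma) s' - (log ∘ Real.Gamma) r) / (s' - r) ≤
      ((log ∘ Real.Gamma) s' - (log ∘ Real.Gamma) r') / (s' - r') := by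
    have e1 : ((log ∘ Real.Gamma) r - (log ∘ Real.Gamma) s') / (r - s') =
        ((log ∘ Real.Gamma) s' - (log ∘ Real.Gamma) r) / (s' - r) := by
      rw [← neg_div_neg_eq]; ring_nf
    have e2 : ((log ∘ Real.Gamma) r' - (log ∘ Real.Gamma) s') / (r' - s') =
        ((log ∘ Real.Gamma) s' - (log ∘ Real.Gamma) r') / (s' - r') := by
      rw [← neg_div_neg_eq]; ring_nf
    rw [e1, e2] at key2
    exact key2
  have key : (log (Real.Gamma s) - log (Real.Gamma r)) / (s - r) ≤
      (log (Real.Gamma s') - log (Real.Gamma r')) / (s' - r') :=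
    key1.trans key2'
  rw [Real.rpow_def_of_pos (div_pos hΓs hΓr), Real.rpow_def_of_pos (div_pos hΓs' hΓr'),
    Real.exp_le_exp, Real.log_div hΓs.ne' hΓr.ne', Real.log_div hΓs'.ne' hΓr'.ne']
  calc (log (Real.Gamma s) - log (Real.Gamma r)) * (1 / (s - r))
      = (log (Real.Gamma s) - log (Real.Gamma r)) / (s - r) := by ring
    _ ≤ (log (Real.Gamma s') - log (Real.Gamma r')) / (s' - r') := key
    _ = (log (Real.Gamma s') - log (Real.Gamma r')) * (1 / (s' - r')) := by ring
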